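/- arXiv:2306.16393 — 2 statements merged into one kernel-verified Lean document; each statement's English description precedes it below -/
import Mathlib

section
/- Let τ_K > τ_M > 1 with τ_K⁻¹ + τ_M⁻¹ < 1, and define λ± := (√(τ_M⁻¹(1−τ_K⁻¹)) ± √(τ_K⁻¹(1−τ_M⁻¹)))². Then 0 < λ₋ < λ₊ < 1, and the Wachter density ω_{τ_K,τ_M}(x) := (τ_K/(2π))·√((x−λ₋)(λ₊−x))/(x(1−x)) on [λ₋, λ₊] integrates to 1, i.e. it defines a probability measure on [λ₋, λ₊]. -/
/-! With `s = √((x - a) (b - x))` and `0 < a < b < 1`, the partial fraction decomposition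
`s / (x (1 - x)) = 1 / s - a b / (x s) - (1 - a) (1 - b) / ((1 - x) s)` has an explicit arcsine
primitive, whence `∫ₐᵇ s / (x (1 - x)) = π (1 - √(a b) - √((1 - a) (1 - b)))`. At `a, b = λ₋, λ₊`
one has `λ₋ λ₊ = (τM⁻¹ - τK⁻¹)²` and `(1 - λ₋) (1 - λ₊) = (1 - τK⁻¹ - τM⁻¹)²`, so the integral is
`2π τK⁻¹`, which the factor `τK / (2π)` normalises to `1`. -/

open MeasureTheory ProbabilityTheory Filter Matrix

noncomputable section

/-- Euclidean dot product on `Fin n → ℝ`. -/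
def dotR {n : ℕ} (a b : Fin n → ℝ) : ℝ := ∑ i, a i * b i

/-- The (cross-)covariance matrix `E[X Yᵀ]` of two mean-zero random vectors. -/
def covMat {Ω : Type} [MeasurableSpace Ω] (μ : Measure Ω) {n m : ℕ}
    (X : Ω → Fin n → ℝ) (Y : Ω → Fin m → ℝ) : Matrix (Fin n) (Fin m) ℝ :=
  Matrix.of fun i j => ∫ ω, X ω i * Y ω j ∂μ

/-- A random vector is centered (jointly) Gaussian if every linear functional of it
is a centered one-dimensional Gaussian. -/
def IsCenteredGaussianVec {Ω : Type} [MeasurableSpace Ω] (μ : Measure Ω)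
    {n : ℕ} (X : Ω → Fin n → ℝ) : Prop :=
  ∀ l : Fin n → ℝ, ∃ v : NNReal,
    Measure.map (fun ω => dotR l (X ω)) μ = gaussianReal 0 v

/-- Fourth-moment Gaussian family of random variables: mean zero and the Wick rule
for all fourth joint moments. -/
def FourthMomentGaussian {Ω : Type} [MeasurableSpace Ω] (μ : Measure Ω)
    {ι : Type} (X : ι → Ω → ℝ) : Prop :=
  (∀ i, ∫ ω, X i ω ∂μ = 0) ∧
  ∀ i j k l, ∫ ω, X i ω * X j ω * X k ω * X l ω ∂μ =
    (∫ ω, X i ω * X j ω ∂μ) * (∫ ω, X k ω * X l ω ∂μ)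
    + (∫ ω, X i ω * X k ω ∂μ) * (∫ ω, X j ω * X l ω ∂μ)
    + (∫ ω, X i ω * X l ω ∂μ) * (∫ ω, X j ω * X k ω ∂μ)

/-- Convergence in probability to a constant, along a sequence of probability spaces. -/
def TendstoInProb {Ω : ℕ → Type} [∀ S, MeasurableSpace (Ω S)]
    (μ : ∀ S, Measure (Ω S)) (X : ∀ S, Ω S → ℝ) (c : ℝ) : Prop :=
  ∀ ε : ℝ, 0 < ε →
    Tendsto (fun S => μ S {ω | ε ≤ |X S ω - c|}) atTop (nhds 0)

/-- `lam` is an antitone enumeration (with multiplicity) of the eigenvalues of `T`. -/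
def EigenvaluesOf {n : ℕ} (T : Matrix (Fin n) (Fin n) ℝ) (lam : Fin n → ℝ) : Prop :=
  Antitone lam ∧ T.charpoly = ∏ i, (Polynomial.X - Polynomial.C (lam i))

/-- The `K × K` matrix whose eigenvalues are the squared sample canonical
correlations between the rows of `U` and of `V`. -/
def ccaMatrix {K M S : ℕ} (U : Matrix (Fin K) (Fin S) ℝ) (V : Matrix (Fin M) (Fin S) ℝ) :
    Matrix (Fin K) (Fin K) ℝ :=
  (U * Uᵀ)⁻¹ * (U * Vᵀ) * (V * Vᵀ)⁻¹ * (V * Uᵀ)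

/-- The companion `M × M` matrix. -/
def ccaMatrixV {K M S : ℕ} (U : Matrix (Fin K) (Fin S) ℝ) (V : Matrix (Fin M) (Fin S) ℝ) :
    Matrix (Fin M) (Fin M) ℝ :=
  (V * Vᵀ)⁻¹ * (V * Uᵀ) * (U * Uᵀ)⁻¹ * (U * Vᵀ)

/-- `λ₊` resp. `λ₋`. -/
def lambdaPlus (τK τM : ℝ) : ℝ :=
  (Real.sqrt (τM⁻¹ * (1 - τK⁻¹)) + Real.sqrt (τK⁻¹ * (1 - τM⁻¹)))^2

def lambdaMinus (τK τM : ℝ) : ℝ :=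
  (Real.sqrt (τM⁻¹ * (1 - τK⁻¹)) - Real.sqrt (τK⁻¹ * (1 - τM⁻¹)))^2

/-- the detection threshold `ρ_c²`. -/
def rhoc2 (τK τM : ℝ) : ℝ := 1 / Real.sqrt ((τM - 1) * (τK - 1))

/-- the outlier location `z_ρ` (as a function of `ρ²`). -/
def zrho (τK τM ρ2 : ℝ) : ℝ :=
  ((τK - 1) * ρ2 + 1) * ((τM - 1) * ρ2 + 1) / (ρ2 * τK * τM)

/-- limit of `sin² θ_x`. -/
def sinx2 (τK τM ρ2 : ℝ) : ℝ :=
  (1 - ρ2) * (τK - 1) / ((τM - 1) * (τK - 1) * ρ2 - 1) *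
    (((τM - 1) * ρ2 + 1) / ((τK - 1) * ρ2 + 1))

/-- limit of `sin² θ_y`. -/
def siny2 (τK τM ρ2 : ℝ) : ℝ :=
  (1 - ρ2) * (τM - 1) / ((τM - 1) * (τK - 1) * ρ2 - 1) *
    (((τK - 1) * ρ2 + 1) / ((τM - 1) * ρ2 + 1))


/-- The density of the Wachter distribution. -/
def wachterDensity (τK τM x : ℝ) : ℝ :=
  τK / (2 * Real.pi) *
    Real.sqrt ((x - lambdaMinus τK τM) * (lambdaPlus τK τM - x)) / (x * (1 - x))

open Real Set

theorem HasDerivAt.arcsin_of_one_sub_sq_eq {f : ℝ → ℝ} {f' r x : ℝ} (hf : HasDerivAt f f' x)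
    (hr : 0 < r) (h : 1 - f x ^ 2 = r ^ 2) :
    HasDerivAt (fun y => arcsin (f y)) (f' / r) x := by
  obtain ⟨h₁, h₂⟩ := abs_lt.mp <| (sq_lt_one_iff_abs_lt_one (f x)).mp (by nlinarith)
  have := (hasDerivAt_arcsin h₁.ne' h₂.ne).comp x hf
  rwa [h, sqrt_sq hr.le, one_div_mul_eq_div] at this

section SqrtQuadratic

variable {a b x : ℝ}

theorem hasDerivAt_arcsin_affine (hax : a < x) (hxb : x < b) :
    HasDerivAt (fun y => arcsin ((2 * y - (a + b)) / (b - a)))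
      (1 / √((x - a) * (b - x))) x := by
  have hs : 0 < √((x - a) * (b - x)) := sqrt_pos.2 (by nlinarith)
  have hs2 : √((x - a) * (b - x)) ^ 2 = (x - a) * (b - x) := sq_sqrt (by nlinarith)
  have hba : b - a ≠ 0 := by linarith
  have hf : HasDerivAt (fun y => (2 * y - (a + b)) / (b - a)) (2 / (b - a)) x := by
    simpa using (((hasDerivAt_id x).const_mul 2).sub_const (a + b)).div_const (b - a)
  refine (hf.arcsin_of_one_sub_sq_eq (r := 2 * √((x - a) * (b - x)) / (b - a))
    (div_pos (by positivity) (by linarith)) (by field_simp; linear_combination -4 * hs2)).congr_deriv ?_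
  field_simp

theorem hasDerivAt_arcsin_moebius (ha : 0 < a) (hax : a < x) (hxb : x < b) :
    HasDerivAt (fun y => arcsin (((a + b) * y - 2 * (a * b)) / ((b - a) * y)))
      (√(a * b) / (x * √((x - a) * (b - x)))) x := by
  have hx : 0 < x := ha.trans hax
  have hs : 0 < √((x - a) * (b - x)) := sqrt_pos.2 (by nlinarith)
  have hs2 : √((x - a) * (b - x)) ^ 2 = (x - a) * (b - x) := sq_sqrt (by nlinarith)
  have hA : 0 < √(a * b) := sqrt_pos.2 (by nlinarith)
  have hA2 : √(a * b) ^ 2 = a * b := sq_sqrt (by nlinarith)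
  have hba : 0 < b - a := by linarith
  have hf : HasDerivAt (fun y => ((a + b) * y - 2 * (a * b)) / ((b - a) * y))
      (2 * (a * b) / ((b - a) * x ^ 2)) x := by
    refine ((((hasDerivAt_id' x).const_mul (a + b)).sub_const (2 * (a * b))).div
      ((hasDerivAt_id' x).const_mul (b - a)) (by positivity)).congr_deriv ?_
    field_simp
    ring
  refine (hf.arcsin_of_one_sub_sq_eq
    (r := 2 * √(a * b) * √((x - a) * (b - x)) / ((b - a) * x)) (by positivity)
    (by field_simp; linear_combination (-4 * √(a * b) ^ 2) * hs2 - 4 * (x - a) * (b - x) * hA2)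
    ).congr_deriv ?_
  field_simp
  exact hA2.symm

theorem sqrt_mul_div_mul_one_sub_eq (hax : a < x) (hxb : x < b) (hx : x ≠ 0) (hx1 : x ≠ 1) :
    √((x - a) * (b - x)) / (x * (1 - x)) =
      1 / √((x - a) * (b - x)) - a * b / (x * √((x - a) * (b - x)))
        - (1 - a) * (1 - b) / ((1 - x) * √((x - a) * (b - x))) := by
  have hs : 0 < √((x - a) * (b - x)) := sqrt_pos.2 (by nlinarith)
  have hs2 : √((x - a) * (b - x)) ^ 2 = (x - a) * (b - x) := sq_sqrt (by nlinarith)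
  have hx1' : 1 - x ≠ 0 := sub_ne_zero.2 hx1.symm
  field_simp
  linear_combination hs2

/-- One arcsine per term of `sqrt_mul_div_mul_one_sub_eq`; the last one is the second one for the
reflected interval `[1 - b, 1 - a]`, composed with `x ↦ 1 - x`. -/
def sqrtQuadPrimitive (a b x : ℝ) : ℝ :=
  arcsin ((2 * x - (a + b)) / (b - a))
    - √(a * b) * arcsin (((a + b) * x - 2 * (a * b)) / ((b - a) * x))
    + √((1 - a) * (1 - b)) *
      arcsin (((1 - b + (1 - a)) * (1 - x) - 2 * ((1 - b) * (1 - a))) / ((1 - a - (1 - b)) * (1 - x)))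

theorem hasDerivAt_sqrtQuadPrimitive (ha : 0 < a) (hax : a < x) (hxb : x < b) (hb : b < 1) :
    HasDerivAt (sqrtQuadPrimitive a b) (√((x - a) * (b - x)) / (x * (1 - x))) x := by
  have hreflect := (hasDerivAt_arcsin_moebius (a := 1 - b) (b := 1 - a) (x := 1 - x)
    (by linarith) (by linarith) (by linarith)).comp x ((hasDerivAt_id' x).const_sub 1)
  have hA2 : √(a * b) ^ 2 = a * b := sq_sqrt (by nlinarith)
  have hB2 : √((1 - a) * (1 - b)) ^ 2 = (1 - a) * (1 - b) := sq_sqrt (by nlinarith)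
  refine ((((hasDerivAt_arcsin_affine hax hxb).sub
    ((hasDerivAt_arcsin_moebius ha hax hxb).const_mul √(a * b))).add
    (hreflect.const_mul √((1 - a) * (1 - b))))).congr_deriv ?_
  rw [sqrt_mul_div_mul_one_sub_eq hax hxb (ha.trans hax).ne' (hxb.trans hb).ne,
    show (1 - x - (1 - b)) * (1 - a - (1 - x)) = (x - a) * (b - x) by ring]
  have hx : x ≠ 0 := (ha.trans hax).ne'
  have hx1 : 1 - x ≠ 0 := by linarith
  have hs : √((x - a) * (b - x)) ≠ 0 := (sqrt_pos.2 (by nlinarith)).ne'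
  field_simp
  linear_combination (x - 1) * hA2 - x * hB2

theorem sqrtQuadPrimitive_sub (ha : 0 < a) (hab : a < b) (hb : b < 1) :
    sqrtQuadPrimitive a b b - sqrtQuadPrimitive a b a =
      π * (1 - √(a * b) - √((1 - a) * (1 - b))) := by
  have hba : b - a ≠ 0 := by linarith
  have ha1 : 1 - a ≠ 0 := by linarith
  have hb1 : 1 - b ≠ 0 := by linarith
  have hb0 : b ≠ 0 := by linarith
  have arg_eq (c d : ℝ) (hd : d ≠ 0) (h : c = d) : c / d = 1 := (div_eq_one_iff_eq hd).2 h
  have arg_eq_neg (c d : ℝ) (hd : d ≠ 0) (h : c = -d) : c / d = -1 := by rw [h, neg_div, div_self hd]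
  unfold sqrtQuadPrimitive
  rw [arg_eq _ _ hba (by ring), arg_eq_neg _ _ hba (by ring),
    arg_eq _ _ (mul_ne_zero hba hb0) (by ring), arg_eq_neg _ _ (mul_ne_zero hba ha.ne') (by ring),
    arg_eq_neg _ _ (mul_ne_zero (by linarith) hb1) (by ring),
    arg_eq _ _ (mul_ne_zero (by linarith) ha1) (by ring), arcsin_one, arcsin_neg_one]
  ring

theorem continuousOn_sqrtQuadPrimitive (ha : 0 < a) (hab : a < b) (hb : b < 1) :
    ContinuousOn (sqrtQuadPrimitive a b) (Icc a b) := by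
  have hba : b - a ≠ 0 := by linarith
  have hx : ∀ x ∈ Icc a b, (b - a) * x ≠ 0 := fun x hx =>
    mul_ne_zero hba (ha.trans_le hx.1).ne'
  have hx1 : ∀ x ∈ Icc a b, (1 - a - (1 - b)) * (1 - x) ≠ 0 := fun x hx =>
    mul_ne_zero (by linarith) (sub_pos.2 (hx.2.trans_lt hb)).ne'
  refine ((continuous_arcsin.comp_continuousOn ?_).sub
    (continuousOn_const.mul (continuous_arcsin.comp_continuousOn ?_))).add
    (continuousOn_const.mul (continuous_arcsin.comp_continuousOn ?_))
  · fun_prop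
  · exact ContinuousOn.div (by fun_prop) (by fun_prop) hx
  · exact ContinuousOn.div (by fun_prop) (by fun_prop) hx1

theorem integral_sqrt_mul_div_mul_one_sub (ha : 0 < a) (hab : a < b) (hb : b < 1) :
    ∫ x in a..b, √((x - a) * (b - x)) / (x * (1 - x)) =
      π * (1 - √(a * b) - √((1 - a) * (1 - b))) := by
  have hint : IntervalIntegrable (fun x => √((x - a) * (b - x)) / (x * (1 - x))) volume a b := by
    refine ContinuousOn.intervalIntegrable (ContinuousOn.div (by fun_prop) (by fun_prop) ?_)
    rw [uIcc_of_le hab.le]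
    exact fun x hx => mul_ne_zero (ha.trans_le hx.1).ne' (sub_pos.2 (hx.2.trans_lt hb)).ne'
  rw [intervalIntegral.integral_eq_sub_of_hasDerivAt_of_le hab.le
    (continuousOn_sqrtQuadPrimitive ha hab hb)
    (fun x hx => hasDerivAt_sqrtQuadPrimitive ha hx.1 hx.2 hb) hint, sqrtQuadPrimitive_sub ha hab hb]

end SqrtQuadratic

section WachterEdges

variable {τK τM : ℝ}

theorem sq_sqrt_inv_mul_one_sub_inv {s t : ℝ} (hs : 1 ≤ s) (ht : 1 ≤ t) :
    √(s⁻¹ * (1 - t⁻¹)) ^ 2 = s⁻¹ * (1 - t⁻¹) :=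
  sq_sqrt (mul_nonneg (inv_nonneg.2 (zero_le_one.trans hs)) (sub_nonneg.2 (inv_le_one_of_one_le₀ ht)))

theorem lambdaMinus_mul_lambdaPlus (hK : 1 ≤ τK) (hM : 1 ≤ τM) :
    lambdaMinus τK τM * lambdaPlus τK τM = (τM⁻¹ - τK⁻¹) ^ 2 := by
  have hp := sq_sqrt_inv_mul_one_sub_inv hM hK
  have hq := sq_sqrt_inv_mul_one_sub_inv hK hM
  unfold lambdaMinus lambdaPlus
  linear_combination (√(τM⁻¹ * (1 - τK⁻¹)) ^ 2 - √(τK⁻¹ * (1 - τM⁻¹)) ^ 2 + (τM⁻¹ - τK⁻¹)) *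
    (hp - hq)

theorem one_sub_lambdaMinus_mul_one_sub_lambdaPlus (hK : 1 ≤ τK) (hM : 1 ≤ τM) :
    (1 - lambdaMinus τK τM) * (1 - lambdaPlus τK τM) = (1 - τK⁻¹ - τM⁻¹) ^ 2 := by
  have hp := sq_sqrt_inv_mul_one_sub_inv hM hK
  have hq := sq_sqrt_inv_mul_one_sub_inv hK hM
  unfold lambdaMinus lambdaPlus
  linear_combination
    (-2 + (√(τM⁻¹ * (1 - τK⁻¹)) ^ 2 - √(τK⁻¹ * (1 - τM⁻¹)) ^ 2 + (τM⁻¹ - τK⁻¹))) * hp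
    + (-2 - (√(τM⁻¹ * (1 - τK⁻¹)) ^ 2 - √(τK⁻¹ * (1 - τM⁻¹)) ^ 2 + (τM⁻¹ - τK⁻¹))) * hq

theorem lambdaMinus_add_lambdaPlus (hK : 1 ≤ τK) (hM : 1 ≤ τM) :
    lambdaMinus τK τM + lambdaPlus τK τM = 2 * (τK⁻¹ + τM⁻¹ - 2 * τK⁻¹ * τM⁻¹) := by
  unfold lambdaMinus lambdaPlus
  linear_combination 2 * sq_sqrt_inv_mul_one_sub_inv hM hK + 2 * sq_sqrt_inv_mul_one_sub_inv hK hM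

theorem lambdaMinus_pos (hM : 1 < τM) (hMK : τM < τK) : 0 < lambdaMinus τK τM := by
  have hK := hM.trans hMK
  refine sq_pos_of_ne_zero (sub_ne_zero.2 fun h => ?_)
  have := congrArg (· ^ 2) h
  simp only [sq_sqrt_inv_mul_one_sub_inv hM.le hK.le, sq_sqrt_inv_mul_one_sub_inv hK.le hM.le] at this
  exact (inv_strictAnti₀ (by linarith) hMK).ne (by linarith)

theorem lambdaMinus_lt_lambdaPlus (hK : 1 < τK) (hM : 1 < τM) :
    lambdaMinus τK τM < lambdaPlus τK τM := by
  have hp : 0 < √(τM⁻¹ * (1 - τK⁻¹)) :=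
    sqrt_pos.2 (mul_pos (inv_pos.2 (by linarith)) (sub_pos.2 (inv_lt_one_of_one_lt₀ hK)))
  have hq : 0 < √(τK⁻¹ * (1 - τM⁻¹)) :=
    sqrt_pos.2 (mul_pos (inv_pos.2 (by linarith)) (sub_pos.2 (inv_lt_one_of_one_lt₀ hM)))
  unfold lambdaMinus lambdaPlus
  nlinarith [mul_pos hp hq]

theorem lambdaPlus_lt_one (hK : 1 ≤ τK) (hM : 1 ≤ τM) (hinv : τK⁻¹ + τM⁻¹ < 1) :
    lambdaPlus τK τM < 1 := by
  have hprod : 0 < (1 - lambdaMinus τK τM) * (1 - lambdaPlus τK τM) := by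
    rw [one_sub_lambdaMinus_mul_one_sub_lambdaPlus hK hM]
    exact sq_pos_of_ne_zero (by linarith)
  have hsum : 0 < (1 - lambdaMinus τK τM) + (1 - lambdaPlus τK τM) := by
    have := lambdaMinus_add_lambdaPlus hK hM
    nlinarith [mul_pos (inv_pos.2 (zero_lt_one.trans_le hK)) (inv_pos.2 (zero_lt_one.trans_le hM))]
  rcases pos_and_pos_or_neg_and_neg_of_mul_pos hprod with h | h <;> linarith [h.1, h.2]

end WachterEdges

/-- the Wachter density defines a probability measure on `[λ₋, λ₊]`. -/
theorem wachter_density_integrates_to_one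
    (τK τM : ℝ) (hτM : 1 < τM) (hτKM : τM < τK) (hτ : τK⁻¹ + τM⁻¹ < 1) :
    0 < lambdaMinus τK τM ∧ lambdaMinus τK τM < lambdaPlus τK τM ∧
    lambdaPlus τK τM < 1 ∧
    (∫ x in (lambdaMinus τK τM)..(lambdaPlus τK τM), wachterDensity τK τM x) = 1 := by
  have hτK : 1 < τK := hτM.trans hτKM
  have hpos := lambdaMinus_pos hτM hτKM
  have hlt := lambdaMinus_lt_lambdaPlus hτK hτM
  have hlt_one := lambdaPlus_lt_one hτK.le hτM.le hτ
  refine ⟨hpos, hlt, hlt_one, ?_⟩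
  simp_rw [wachterDensity, mul_div_assoc]
  rw [intervalIntegral.integral_const_mul, integral_sqrt_mul_div_mul_one_sub hpos hlt hlt_one,
    lambdaMinus_mul_lambdaPlus hτK.le hτM.le, one_sub_lambdaMinus_mul_one_sub_lambdaPlus hτK.le hτM.le,
    sqrt_sq (sub_nonneg.2 (inv_strictAnti₀ (by linarith) hτKM).le), sqrt_sq (by linarith)]
  field_simp
  ring

end
end

section
/- For ρ_c² < ρ² ≤ 1 (where ρ_c² := 1/√((τ_M−1)(τ_K−1)) and τ_K, τ_M > 1, τ_K⁻¹+τ_M⁻¹ < 1), let z_ρ := ((τ_K−1)ρ² + 1)((τ_M−1)ρ² + 1)/(ρ²τ_Kτ_M) and λ± := (√(τ_M⁻¹(1−τ_K⁻¹)) ± √(τ_K⁻¹(1−τ_M⁻¹)))². Then z_ρ ≥ λ₊ and √((z_ρ − λ₋)(z_ρ − λ₊)) = (ρ⁴(τ_K−1)(τ_M−1) − 1)/(ρ²τ_Mτ_K), where the left-hand side is the positive square root. -/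
open MeasureTheory ProbabilityTheory Filter Matrix

noncomputable section

/-- equation (B.25) of the paper: explicit evaluation of
`√((z_ρ - λ₋)(z_ρ - λ₊))`. -/
theorem zrho_sqrt_identity
    (τK τM ρ2 : ℝ) (hτK : 1 < τK) (hτM : 1 < τM) (hτ : τK⁻¹ + τM⁻¹ < 1)
    (h1 : rhoc2 τK τM < ρ2) (h2 : ρ2 ≤ 1) :
    lambdaPlus τK τM ≤ zrho τK τM ρ2 ∧
    Real.sqrt ((zrho τK τM ρ2 - lambdaMinus τK τM) * (zrho τK τM ρ2 - lambdaPlus τK τM))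
      = (ρ2^2 * (τK - 1) * (τM - 1) - 1) / (ρ2 * τM * τK) := by
  have hK0 : (0:ℝ) < τK := lt_trans one_pos hτK
  have hM0 : (0:ℝ) < τM := lt_trans one_pos hτM
  have hP : 0 < (τM - 1) * (τK - 1) := by nlinarith
  have hsqrtP : 0 < Real.sqrt ((τM - 1) * (τK - 1)) := Real.sqrt_pos.2 hP
  have hsqP : (Real.sqrt ((τM - 1) * (τK - 1)))^2 = (τM - 1) * (τK - 1) :=
    Real.sq_sqrt hP.le
  have hρ0 : 0 < ρ2 := lt_trans (div_pos one_pos hsqrtP) h1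
  have h1' : 1 < ρ2 * Real.sqrt ((τM - 1) * (τK - 1)) := by
    rw [rhoc2, div_lt_iff₀ hsqrtP] at h1; linarith
  -- R > 0
  have hRnum : 0 < ρ2^2 * (τK - 1) * (τM - 1) - 1 := by
    nlinarith [hsqrtP, h1', hsqP]
  have hR : 0 < (ρ2^2 * (τK - 1) * (τM - 1) - 1) / (ρ2 * τM * τK) := by positivity
  set s := Real.sqrt (τM⁻¹ * (1 - τK⁻¹)) with hsdef
  set t := Real.sqrt (τK⁻¹ * (1 - τM⁻¹)) with htdef
  have hKi : τK⁻¹ < 1 := by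
    rw [inv_lt_one_iff₀]; right; exact hτK
  have hMi : τM⁻¹ < 1 := by
    rw [inv_lt_one_iff₀]; right; exact hτM
  have hs0 : 0 ≤ s := Real.sqrt_nonneg _
  have ht0 : 0 ≤ t := Real.sqrt_nonneg _
  have hs2 : s^2 = τM⁻¹ * (1 - τK⁻¹) :=
    Real.sq_sqrt (mul_nonneg (by positivity) (by linarith))
  have ht2 : t^2 = τK⁻¹ * (1 - τM⁻¹) :=
    Real.sq_sqrt (mul_nonneg (by positivity) (by linarith))
  have hKne : τK ≠ 0 := ne_of_gt hK0
  have hMne : τM ≠ 0 := ne_of_gt hM0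
  have hρne : ρ2 ≠ 0 := ne_of_gt hρ0
  -- key product identity
  have hprod : (zrho τK τM ρ2 - lambdaMinus τK τM) * (zrho τK τM ρ2 - lambdaPlus τK τM)
      = ((ρ2^2 * (τK - 1) * (τM - 1) - 1) / (ρ2 * τM * τK))^2 := by
    unfold zrho lambdaMinus lambdaPlus
    rw [← hsdef, ← htdef]
    have expand : ∀ x : ℝ, (x - (s - t)^2) * (x - (s + t)^2)
        = x^2 - 2*(s^2 + t^2)*x + (s^2 - t^2)^2 := by intro x; ring
    rw [expand, hs2, ht2]
    field_simp
    ring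
  -- z - (s^2 + t^2) > 0
  have hA : 0 < zrho τK τM ρ2 - (s^2 + t^2) := by
    rw [hs2, ht2]
    have hz : zrho τK τM ρ2 - (τM⁻¹ * (1 - τK⁻¹) + τK⁻¹ * (1 - τM⁻¹))
        = (ρ2^2 * (τK - 1) * (τM - 1) + 1) / (ρ2 * τK * τM) := by
      unfold zrho; field_simp; ring
    rw [hz]
    exact div_pos (by nlinarith) (by positivity)
  -- z ≥ λ₊
  have hle : lambdaPlus τK τM ≤ zrho τK τM ρ2 := by
    have hmin : zrho τK τM ρ2 - lambdaMinus τK τM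
        = (zrho τK τM ρ2 - (s^2 + t^2)) + 2*s*t := by
      unfold lambdaMinus; rw [← hsdef, ← htdef]; ring
    have hplus : zrho τK τM ρ2 - lambdaPlus τK τM
        = (zrho τK τM ρ2 - (s^2 + t^2)) - 2*s*t := by
      unfold lambdaPlus; rw [← hsdef, ← htdef]; ring
    have hst : 0 ≤ 2*s*t := by positivity
    have hminpos : 0 < zrho τK τM ρ2 - lambdaMinus τK τM := by
      rw [hmin]; linarith
    have hsq : (0:ℝ) ≤ ((ρ2^2 * (τK - 1) * (τM - 1) - 1) / (ρ2 * τM * τK))^2 :=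
      sq_nonneg _
    nlinarith [hprod, hminpos, hsq]
  refine ⟨hle, ?_⟩
  rw [hprod, Real.sqrt_sq hR.le]

end
end
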